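/- For integers n ≥ 2 and 0 ≤ m ≤ n-1, define H₁ := -C(n,m)·C(n-2,m) - Σ_{k=1}^{m} (-1)^k (C(n,m+k)·C(n-2,m-k) + C(n,m-k)·C(n-2,m+k)). Then H₁ = C(n-2,m-1) - C(n-2,m). -/

import Mathlib

/-- Binomial coefficient extended to integer arguments: 0 unless 0 ≤ k ≤ n. -/
def ichoose (n k : ℤ) : ℤ :=
  if 0 ≤ k ∧ k ≤ n then (n.toNat).choose k.toNat else 0

/-!
Comparing coefficients of `x ^ (2 * m)` in
`(1 - x) ^ n * (1 + x) ^ (n - 2) = (1 - x ^ 2) ^ (n - 2) * (1 - x) ^ 2` gives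
`∑ j, (-1) ^ j * C(n, j) * C(n - 2, 2 * m - j) = (-1) ^ m * (C(n - 2, m) - C(n - 2, m - 1))`.
Pairing the terms `j = m + k` and `j = m - k` of the left side, which carry the same sign,
turns it into `(-1) ^ (m + 1) * H₁`.
-/
open Polynomial Finset

theorem ichoose_natCast (n k : ℕ) : ichoose n k = n.choose k := by
  unfold ichoose
  split_ifs with h
  · simp
  · rw [Nat.choose_eq_zero_of_lt (by omega), Nat.cast_zero]

section Coeff

variable {R : Type*} [CommRing R]

theorem coeff_one_sub_X_pow (n k : ℕ) :
    ((1 - X : R[X]) ^ n).coeff k = (-1) ^ k * n.choose k := by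
  induction n generalizing k with
  | zero => cases k <;> simp [coeff_one]
  | succ n ih =>
    rw [pow_succ, mul_one_sub, coeff_sub]
    cases k with
    | zero => simp [ih]
    | succ k =>
      rw [coeff_mul_X, ih, ih, Nat.choose_succ_succ, Nat.cast_add, pow_succ]
      ring

theorem one_sub_X_sq_pow_eq_expand (n : ℕ) :
    (1 - X ^ 2 : R[X]) ^ n = expand R 2 ((1 - X) ^ n) := by
  simp

theorem coeff_one_sub_X_sq_pow_two_mul (n k : ℕ) :
    ((1 - X ^ 2 : R[X]) ^ n).coeff (2 * k) = (-1) ^ k * n.choose k := by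
  rw [one_sub_X_sq_pow_eq_expand, coeff_expand_mul' two_pos, coeff_one_sub_X_pow]

theorem coeff_one_sub_X_sq_pow_two_mul_add_one (n k : ℕ) :
    ((1 - X ^ 2 : R[X]) ^ n).coeff (2 * k + 1) = 0 := by
  rw [one_sub_X_sq_pow_eq_expand, coeff_expand two_pos, if_neg (by omega)]

end Coeff

theorem sum_range_two_mul_add_one_eq_center_add_pairs {M : Type*} [AddCommMonoid M]
    (g : ℕ → M) (n : ℕ) :
    ∑ i ∈ range (2 * n + 1), g i
      = g n + ∑ k ∈ range n, (g (n + (k + 1)) + g (n - (k + 1))) := by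
  rw [show 2 * n + 1 = n + (n + 1) by ring, sum_range_add, sum_range_succ', sum_add_distrib,
    ← sum_range_reflect g n]
  simp only [add_zero, show ∀ k, n - 1 - k = n - (k + 1) by omega]
  abel

theorem sum_Icc_one_natCast_eq_sum_range {M : Type*} [AddCommMonoid M] (f : ℤ → M) (n : ℕ) :
    ∑ k ∈ Icc (1 : ℤ) n, f k = ∑ k ∈ range n, f (k + 1) := by
  rw [Int.Icc_eq_finset_map, sum_map, show ((n : ℤ) + 1 - 1).toNat = n by omega]
  simp only [Function.Embedding.trans_apply, Nat.castEmbedding_apply, addLeftEmbedding_apply,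
    add_comm]

theorem neg_one_pow_sub_eq_add {R : Type*} [Monoid R] [HasDistribNeg R] {a b : ℕ} (h : b ≤ a) :
    (-1 : R) ^ (a - b) = (-1) ^ (a + b) := by
  rw [show a + b = a - b + 2 * b by omega, pow_add, pow_mul, neg_one_sq, one_pow, mul_one]

theorem sum_alternating_choose_mul_choose (N M : ℕ) :
    ∑ i ∈ range (2 * M + 3), (-1 : ℤ) ^ i * (N + 2).choose i * N.choose (2 * M + 2 - i)
      = (-1) ^ M * (N.choose M - N.choose (M + 1)) := by
  have hfactor : ((1 - X) ^ (N + 2) * (1 + X) ^ N : ℤ[X])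
      = (1 - X ^ 2) ^ N - (1 - X ^ 2) ^ N * X - (1 - X ^ 2) ^ N * X
        + (1 - X ^ 2) ^ N * X ^ 2 := by
    rw [show (1 - X ^ 2 : ℤ[X]) = (1 - X) * (1 + X) by ring, mul_pow]
    ring
  have hcoeff := congrArg (coeff · (2 * M + 2)) hfactor
  rw [coeff_mul, Nat.sum_antidiagonal_eq_sum_range_succ
    (fun i j => ((1 - X : ℤ[X]) ^ (N + 2)).coeff i * ((1 + X) ^ N).coeff j)] at hcoeff
  rw [show 2 * M + 2 = 2 * (M + 1) by ring, coeff_add, coeff_sub, coeff_sub,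
    coeff_one_sub_X_sq_pow_two_mul, show 2 * (M + 1) = 2 * M + 1 + 1 by ring, coeff_mul_X,
    coeff_one_sub_X_sq_pow_two_mul_add_one, coeff_mul_X_pow,
    coeff_one_sub_X_sq_pow_two_mul] at hcoeff
  simp only [coeff_one_sub_X_pow, coeff_one_add_X_pow] at hcoeff
  exact hcoeff.trans (by ring)

theorem choose_mul_choose_add_sum_alternating_pairs (N M : ℕ) :
    ((N + 2).choose (M + 1) * N.choose (M + 1) : ℤ)
      + ∑ k ∈ range (M + 1), (-1 : ℤ) ^ (k + 1) *
        ((N + 2).choose (M + 1 + (k + 1)) * N.choose (M + 1 - (k + 1))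
          + (N + 2).choose (M + 1 - (k + 1)) * N.choose (M + 1 + (k + 1)))
      = N.choose (M + 1) - N.choose M := by
  set c := M + 1
  let g : ℕ → ℤ := fun i => (-1) ^ i * (N + 2).choose i * N.choose (2 * c - i)
  have hcenter : g c = (-1) ^ c * ((N + 2).choose c * N.choose c) := by
    simp only [g, show 2 * c - c = c by omega]
    ring
  have hpair (j : ℕ) (hj : j ≤ c) : g (c + j) + g (c - j) = (-1) ^ c * ((-1) ^ j *
      ((N + 2).choose (c + j) * N.choose (c - j)
        + (N + 2).choose (c - j) * N.choose (c + j))) := by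
    simp only [g, neg_one_pow_sub_eq_add hj, show 2 * c - (c + j) = c - j by omega,
      show 2 * c - (c - j) = c + j by omega, pow_add]
    ring
  have hconv : ∑ i ∈ range (2 * c + 1), g i = (-1) ^ M * (N.choose M - N.choose c) :=
    sum_alternating_choose_mul_choose N M
  have hsum := sum_range_two_mul_add_one_eq_center_add_pairs g c
  rw [sum_congr rfl fun k hk => hpair (k + 1) (mem_range.mp hk), ← mul_sum, hcenter, ← mul_add,
    hconv] at hsum
  refine mul_left_cancel₀ (pow_ne_zero c (neg_ne_zero.mpr one_ne_zero)) ?_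
  rw [← hsum, pow_succ]
  ring

theorem H1_identity_general (n m : ℤ) (hn : 2 ≤ n) (hm0 : 0 ≤ m) :
    -ichoose n m * ichoose (n - 2) m
      - ∑ k ∈ Finset.Icc (1 : ℤ) m, (-1 : ℤ) ^ k.toNat *
          (ichoose n (m + k) * ichoose (n - 2) (m - k)
            + ichoose n (m - k) * ichoose (n - 2) (m + k))
    = ichoose (n - 2) (m - 1) - ichoose (n - 2) m := by
  obtain ⟨N, rfl⟩ : ∃ N : ℕ, n = N + 2 := ⟨(n - 2).toNat, by omega⟩
  obtain ⟨_ | M, rfl⟩ := Int.eq_ofNat_of_zero_le hm0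
  · simp [ichoose, add_nonneg]
  have hchoose (k : ℕ) : ichoose (N + 2) k = (N + 2).choose k := by
    exact_mod_cast ichoose_natCast (N + 2) k
  have hterm (k : ℕ) (hk : k ∈ range (M + 1)) :
      (-1 : ℤ) ^ ((k : ℤ) + 1).toNat *
          (ichoose (N + 2) ((M + 1 : ℕ) + (k + 1)) * ichoose N ((M + 1 : ℕ) - (k + 1))
            + ichoose (N + 2) ((M + 1 : ℕ) - (k + 1)) * ichoose N ((M + 1 : ℕ) + (k + 1)))
        = (-1 : ℤ) ^ (k + 1) *
          ((N + 2).choose (M + 1 + (k + 1)) * N.choose (M + 1 - (k + 1))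
            + (N + 2).choose (M + 1 - (k + 1)) * N.choose (M + 1 + (k + 1))) := by
    have hkM : k + 1 ≤ M + 1 := mem_range.mp hk
    rw [show ((k : ℤ) + 1).toNat = k + 1 by omega,
      show ((M + 1 : ℕ) : ℤ) + (k + 1) = ((M + 1 + (k + 1) : ℕ) : ℤ) by omega,
      show ((M + 1 : ℕ) : ℤ) - (k + 1) = ((M + 1 - (k + 1) : ℕ) : ℤ) by omega,
      hchoose, hchoose, ichoose_natCast, ichoose_natCast]
  rw [add_sub_cancel_right, sum_Icc_one_natCast_eq_sum_range, sum_congr rfl hterm,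
    show ((M + 1 : ℕ) : ℤ) - 1 = M by omega, hchoose, ichoose_natCast, ichoose_natCast]
  linarith [choose_mul_choose_add_sum_alternating_pairs N M]

theorem H1_identity (n m : ℤ) (hn : 2 ≤ n) (hm0 : 0 ≤ m) (hm1 : m ≤ n - 1) :
    -ichoose n m * ichoose (n - 2) m
      - ∑ k ∈ Finset.Icc (1 : ℤ) m, (-1 : ℤ) ^ k.toNat *
          (ichoose n (m + k) * ichoose (n - 2) (m - k)
            + ichoose n (m - k) * ichoose (n - 2) (m + k))
    = ichoose (n - 2) (m - 1) - ichoose (n - 2) m :=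
  H1_identity_general n m hn hm0
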